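/- Converse universal factorization: let ν : V_1 × ... × V_m → P be multilinear with span(Im ν) = P, and suppose every multilinear form φ : V_1 × ... × V_m → F factors as φ = h_φ ∘ ν for some linear h_φ : P → F. Then dim P = ∏_{i=1}^m dim V_i, i.e., (P, ν) is a tensor product of the V_i. -/

import Mathlib

/-!
The multilinear map `ν` induces a linear map `PiTensorProduct.lift ν : (⨂ i, V i) → P`, which
is surjective because the image of `ν` spans `P`. A linear form on `⨂ i, V i` is the same as a
multilinear form on `V`, so the factorization hypothesis says that every linear form on the tensor
product factors through `lift ν`; hence `lift ν` kills no nonzero vector and is an isomorphism.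
-/

open Module PiTensorProduct
open scoped TensorProduct

theorem LinearMap.injective_of_forall_dual_factors {R M N : Type*} [CommRing R]
    [AddCommGroup M] [Module R M] [Projective R M] [AddCommGroup N] [Module R N]
    (f : M →ₗ[R] N) (hf : ∀ φ : Dual R M, ∃ ψ : Dual R N, φ = ψ ∘ₗ f) :
    Function.Injective f := by
  refine (injective_iff_map_eq_zero f).mpr fun x hx => ?_
  refine (forall_dual_apply_eq_zero_iff R x).mp fun φ => ?_
  obtain ⟨ψ, rfl⟩ := hf φ
  simp [hx]

theorem PiTensorProduct.finrank_eq_prod {ι K : Type*} [Fintype ι] [Field K] {V : ι → Type*}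
    [∀ i, AddCommGroup (V i)] [∀ i, Module K (V i)] [∀ i, FiniteDimensional K (V i)] :
    finrank K (⨂[K] i, V i) = ∏ i, finrank K (V i) := by
  classical
  rw [finrank_eq_card_basis (Basis.piTensorProduct fun i => finBasis K (V i)), Fintype.card_pi]
  simp

section Lift

variable {ι R : Type*} [CommRing R] {V : ι → Type*} {P : Type*}
  [∀ i, AddCommGroup (V i)] [∀ i, Module R (V i)] [AddCommGroup P] [Module R P]

theorem PiTensorProduct.range_lift (ν : MultilinearMap R V P) :
    LinearMap.range (lift ν) = Submodule.span R (Set.range ν) := by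
  rw [← Submodule.map_top, ← span_tprod_eq_top, Submodule.map_span, ← Set.range_comp]
  congr 2
  ext x
  exact lift.tprod x

theorem PiTensorProduct.lift_injective_of_forall_factors [Projective R (⨂[R] i, V i)]
    (ν : MultilinearMap R V P)
    (hν : ∀ φ : MultilinearMap R V R, ∃ h : P →ₗ[R] R, ∀ x, φ x = h (ν x)) :
    Function.Injective (lift ν) := by
  refine (lift ν).injective_of_forall_dual_factors fun φ => ?_
  obtain ⟨h, hh⟩ := hν (φ.compMultilinearMap (tprod R))
  exact ⟨h, ext <| MultilinearMap.ext fun x => by simpa using hh x⟩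

end Lift

/-- Converse universal factorization: if the image of `ν` spans `P` and every
multilinear form factors through `ν`, then `dim P = ∏ dim Vᵢ`. -/
theorem stmt_8 {F : Type*} [Field F] {m : ℕ} {V : Fin m → Type*} {P : Type*}
    [∀ i, AddCommGroup (V i)] [∀ i, Module F (V i)] [AddCommGroup P] [Module F P]
    [∀ i, FiniteDimensional F (V i)]
    (ν : MultilinearMap F V P)
    (hspan : Submodule.span F (Set.range fun x : (i : Fin m) → V i => ν x) = ⊤)
    (hUF : ∀ φ : MultilinearMap F V F, ∃ h : P →ₗ[F] F,
      ∀ x : (i : Fin m) → V i, φ x = h (ν x)) :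
    Module.finrank F P = ∏ i : Fin m, Module.finrank F (V i) := by
  have hsurj : Function.Surjective (lift ν) := by
    rw [← LinearMap.range_eq_top, range_lift]
    exact hspan
  let e := LinearEquiv.ofBijective (lift ν) ⟨lift_injective_of_forall_factors ν hUF, hsurj⟩
  rw [← e.finrank_eq, finrank_eq_prod]
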